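/- The group PSL(2,ℤ) is isomorphic to the free product ℤ/2 * ℤ/3. -/

import Mathlib

/-!
`PSL(2, ℤ)` is generated by the images of `S` and `R = S * T`, which have orders `2` and `3`
because `S ^ 2 = R ^ 3 = -1`. The free product maps onto it, and this map is injective by
ping-pong on the upper half plane with the half planes `re z > 0` and `re z < 0`: `S` acts as
`z ↦ -1 / z` and swaps them, while `R • z = -1 / (z + 1)` and `R ^ 2 • z = -1 / z - 1` both send
`re z > 0` into `re z < 0`.
-/

open MatrixGroups ModularGroup UpperHalfPlane Subgroup Pointwise

universe u

namespace Monoid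

variable {M N : Type u} [Group M] [Group N]

instance instGroupCond (b : Bool) : Group (cond b M N) :=
  match b with
  | true => ‹Group M›
  | false => ‹Group N›

def CoprodI.boolMulEquivCoprod : CoprodI (fun b => cond b M N) ≃* Coprod M N :=
  MonoidHom.toMulEquiv
    (CoprodI.lift fun | true => Coprod.inl | false => Coprod.inr)
    (Coprod.lift (CoprodI.of (M := fun b => cond b M N) (i := true))
      (CoprodI.of (M := fun b => cond b M N) (i := false)))
    (CoprodI.ext_hom _ _ fun | true => by ext; simp | false => by ext; simp)
    (Coprod.hom_ext (by ext; simp) (by ext; simp))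

theorem Coprod.lift_injective_of_ping_pong {G α : Type*} [Group G] [MulAction G α]
    (f : M →* G) (g : N →* G) (hcard : 3 ≤ Cardinal.mk M ∨ 3 ≤ Cardinal.mk N)
    {X Y : Set α} (hX : X.Nonempty) (hY : Y.Nonempty) (hXY : Disjoint X Y)
    (hf : ∀ m, m ≠ 1 → f m • Y ⊆ X) (hg : ∀ n, n ≠ 1 → g n • X ⊆ Y) :
    Function.Injective (Coprod.lift f g) := by
  let F : ∀ b, cond b M N →* G := fun | true => f | false => g
  have hlift : Coprod.lift f g =
      (CoprodI.lift F).comp (CoprodI.boolMulEquivCoprod (M := M) (N := N)).symm.toMonoidHom :=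
    Coprod.hom_ext rfl rfl
  rw [hlift]
  refine (CoprodI.lift_injective_of_ping_pong F ?_ (fun b => cond b X Y) ?_ ?_ ?_).comp
    (MulEquiv.injective _)
  · exact hcard.elim (fun h => Or.inr ⟨true, h⟩) (fun h => Or.inr ⟨false, h⟩)
  · rintro (_ | _) <;> assumption
  · rintro (_ | _) (_ | _) h <;> first | exact absurd rfl h | exact hXY | exact hXY.symm
  · rintro (_ | _) (_ | _) h <;> first | exact absurd rfl h | exact hf | exact hg

end Monoid

def zmodPowHom {G : Type*} [Group G] (n : ℕ) [NeZero n] (g : G) (hg : g ^ n = 1) :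
    Multiplicative (ZMod n) →* G where
  toFun x := g ^ x.toAdd.val
  map_one' := by simp
  map_mul' x y := by
    simp only [toAdd_mul, ZMod.val_add, ← pow_add]
    exact (pow_eq_pow_mod _ hg).symm

namespace ModularGroup

def R : SL(2, ℤ) := S * T

lemma S_sq : S ^ 2 = -1 := by decide

lemma R_sq : R ^ 2 = T⁻¹ * S := by decide

lemma R_pow_three : R ^ 3 = -1 := by decide

lemma closure_S_R : Subgroup.closure {S, R} = ⊤ := by
  rw [eq_top_iff, ← SpecialLinearGroup.SL2Z_generators, closure_le]
  have hS : S ∈ Subgroup.closure {S, R} := subset_closure (by simp)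
  have hR : R ∈ Subgroup.closure {S, R} := subset_closure (by simp)
  rintro _ (rfl | rfl)
  · exact hS
  · simpa [R] using mul_mem (inv_mem hS) hR

lemma eq_one_or_eq_neg_one_of_mem_center {g : SL(2, ℤ)} (hg : g ∈ center SL(2, ℤ)) :
    g = 1 ∨ g = -1 := by
  obtain ⟨r, hr, hrg⟩ := Matrix.SpecialLinearGroup.mem_center_iff.mp hg
  rw [Fintype.card_fin] at hr
  rcases sq_eq_one_iff.mp hr with rfl | rfl
  · exact Or.inl (Subtype.ext (by simp [← hrg]))
  · exact Or.inr (Subtype.ext (by simp [← hrg]))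

lemma coe_pow_eq_one_of_pow_eq_neg_one {g : SL(2, ℤ)} {n : ℕ} (hg : g ^ n = -1) :
    (g : PSL(2, ℤ)) ^ n = 1 := by
  rw [← QuotientGroup.mk_pow, QuotientGroup.eq_one_iff, hg]
  exact Subgroup.mem_center_iff.mpr fun g => by simp

lemma center_le_ker_toPermHom : center SL(2, ℤ) ≤ (MulAction.toPermHom SL(2, ℤ) ℍ).ker := by
  intro g hg
  rw [MonoidHom.mem_ker]
  ext z
  rcases eq_one_or_eq_neg_one_of_mem_center hg with rfl | rfl <;> simp

noncomputable def pslToPerm : PSL(2, ℤ) →* Equiv.Perm ℍ :=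
  QuotientGroup.lift _ (MulAction.toPermHom SL(2, ℤ) ℍ) center_le_ker_toPermHom

lemma re_S_smul (z : ℍ) : (S • z).re = -z.re / Complex.normSq z := by
  rw [modular_S_smul]
  simp [Complex.inv_re, neg_div]

lemma re_S_smul_pos_iff (z : ℍ) : 0 < (S • z).re ↔ z.re < 0 := by
  rw [re_S_smul, div_pos_iff_of_pos_right (normSq_pos z), neg_pos]

lemma re_S_smul_neg_iff (z : ℍ) : (S • z).re < 0 ↔ 0 < z.re := by
  rw [re_S_smul, neg_div, neg_lt_zero, div_pos_iff_of_pos_right (normSq_pos z)]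

lemma re_R_smul_neg {z : ℍ} (hz : 0 < z.re) : (R • z).re < 0 := by
  rw [R, mul_smul, re_S_smul_neg_iff, re_T_smul]
  linarith

lemma re_R_sq_smul_neg {z : ℍ} (hz : 0 < z.re) : (R ^ 2 • z).re < 0 := by
  rw [R_sq, mul_smul, re_T_inv_smul]
  linarith [(re_S_smul_neg_iff z).mpr hz]

lemma pslToPerm_S_pow_smul_subset {k : ZMod 2} (hk : k ≠ 0) :
    pslToPerm ((S : PSL(2, ℤ)) ^ k.val) • {z : ℍ | z.re < 0} ⊆ {z | 0 < z.re} := by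
  obtain rfl : k = 1 := by revert k; decide
  rw [ZMod.val_one, pow_one, Set.smul_set_subset_iff]
  exact fun z hz => (re_S_smul_pos_iff z).mpr hz

lemma pslToPerm_R_pow_smul_subset {k : ZMod 3} (hk : k ≠ 0) :
    pslToPerm ((R : PSL(2, ℤ)) ^ k.val) • {z : ℍ | 0 < z.re} ⊆ {z | z.re < 0} := by
  rw [Set.smul_set_subset_iff]
  intro z hz
  obtain rfl | rfl : k = 1 ∨ k = 2 := by revert k; decide
  · rw [ZMod.val_one, pow_one]
    exact re_R_smul_neg hz
  · rw [← QuotientGroup.mk_pow]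
    exact re_R_sq_smul_neg hz

noncomputable def coprodToPSL :
    Monoid.Coprod (Multiplicative (ZMod 2)) (Multiplicative (ZMod 3)) →* PSL(2, ℤ) :=
  Monoid.Coprod.lift (zmodPowHom 2 (S : PSL(2, ℤ)) (coe_pow_eq_one_of_pow_eq_neg_one S_sq))
    (zmodPowHom 3 (R : PSL(2, ℤ)) (coe_pow_eq_one_of_pow_eq_neg_one R_pow_three))

theorem coprodToPSL_surjective : Function.Surjective coprodToPSL := by
  have h : Subgroup.closure {S, R} ≤ coprodToPSL.range.comap (QuotientGroup.mk' _) := by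
    rw [closure_le]
    rintro _ (rfl | rfl)
    · exact ⟨Monoid.Coprod.inl (Multiplicative.ofAdd 1), pow_one (S : PSL(2, ℤ))⟩
    · exact ⟨Monoid.Coprod.inr (Multiplicative.ofAdd 1), pow_one (R : PSL(2, ℤ))⟩
  intro x
  obtain ⟨g, rfl⟩ := QuotientGroup.mk_surjective x
  exact h (closure_S_R ▸ mem_top g)

theorem coprodToPSL_injective : Function.Injective coprodToPSL := by
  refine Function.Injective.of_comp (f := pslToPerm) ?_
  rw [← MonoidHom.coe_comp, coprodToPSL, Monoid.Coprod.comp_lift]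
  refine Monoid.Coprod.lift_injective_of_ping_pong _ _ (Or.inr (by simp))
    (X := {z : ℍ | 0 < z.re}) (Y := {z : ℍ | z.re < 0})
    ⟨T • I, show 0 < (T • I).re by rw [re_T_smul, I_re]; norm_num⟩
    ⟨T⁻¹ • I, show (T⁻¹ • I).re < 0 by rw [re_T_inv_smul, I_re]; norm_num⟩
    (Set.disjoint_left.mpr fun z (hz : 0 < z.re) (hz' : z.re < 0) => lt_asymm hz hz')
    (fun _ hm => pslToPerm_S_pow_smul_subset hm) (fun _ hm => pslToPerm_R_pow_smul_subset hm)

end ModularGroup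

/-- `PSL(2,ℤ) = SL(2,ℤ)/{±I}` is isomorphic to the free product `ℤ/2 * ℤ/3`. -/
theorem stmt5 :
    Nonempty ((Matrix.SpecialLinearGroup (Fin 2) ℤ ⧸
        Subgroup.center (Matrix.SpecialLinearGroup (Fin 2) ℤ)) ≃*
      Monoid.Coprod (Multiplicative (ZMod 2)) (Multiplicative (ZMod 3))) :=
  ⟨(MulEquiv.ofBijective coprodToPSL ⟨coprodToPSL_injective, coprodToPSL_surjective⟩).symm⟩
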